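/- arXiv:2405.12793 — 2 statements merged into one kernel-verified Lean document; each statement's English description precedes it below -/
import Mathlib

section
/- Suppose the Aubry set Ω_q is irreducible (S_q(x,y)=0 for all x,y∈Ω_q) and m(q)=0. Then the max-plus IFS (X,φ,q) admits a unique invariant idempotent probability, and its density λ satisfies λ(x) = S_q(x,z) for every z ∈ Ω_q. -/
set_option linter.unusedSectionVars false
set_option maxHeartbeats 1000000


open MeasureTheory Filter Topology

/-- `wordComp φ [j₁,…,jₙ] x = φ_{j₁} ∘ ⋯ ∘ φ_{jₙ} (x)`. -/
def wordComp {J X : Type*} (φ : J → X → X) : List J → X → X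
  | [], x => x
  | j :: t, x => φ j (wordComp φ t x)

/-- `birkSum φ A m ω x = Σ_k A(j_k, φ_{(j_{k+1},…,j_n)}(x)) − n·m` for `ω = (j₁,…,jₙ)`. -/
def birkSum {J X : Type*} (φ : J → X → X) (A : J → X → ℝ) (m : ℝ) :
    List J → X → ℝ
  | [], _ => 0
  | j :: t, x => A j (wordComp φ t x) - m + birkSum φ A m t x

/-- The Mañé potential `S_A(x,y)`, as an extended real number. -/
noncomputable def manePot {J X : Type*} [MetricSpace X] (φ : J → X → X)
    (A : J → X → ℝ) (m : ℝ) (x y : X) : EReal :=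
  ⨅ (ε : ℝ) (_ : 0 < ε),
    sSup {s : EReal | ∃ ω : List J, ω ≠ [] ∧ dist x (wordComp φ ω y) < ε ∧
      s = ((birkSum φ A m ω y : ℝ) : EReal)}

/-- The Aubry set `Ω_A = {x : S_A(x,x) = 0}`. -/
noncomputable def aubry {J X : Type*} [MetricSpace X] (φ : J → X → X)
    (A : J → X → ℝ) (m : ℝ) : Set X :=
  {x : X | manePot φ A m x x = 0}

/-- A Borel probability `π` on `J × X` is holonomic for the IFS `φ`. -/
def Holonomic {J X : Type*} [MeasurableSpace J] [MeasurableSpace X]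
    [TopologicalSpace X] (φ : J → X → X) (π : Measure (J × X)) : Prop :=
  IsProbabilityMeasure π ∧
    ∀ g : C(X, ℝ), (∫ p, g p.2 ∂π) = ∫ p, g (φ p.1 p.2) ∂π

section basic
variable {J X : Type*} (φ : J → X → X) (A : J → X → ℝ)

theorem wordComp_append (a b : List J) (x : X) :
    wordComp φ (a ++ b) x = wordComp φ a (wordComp φ b x) := by
  induction a with
  | nil => rfl
  | cons j t ih => simp [wordComp, ih]

theorem birkSum_append (a b : List J) (x : X) :
    birkSum φ A 0 (a ++ b) x = birkSum φ A 0 a (wordComp φ b x) + birkSum φ A 0 b x := by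
  induction a with
  | nil => simp [birkSum]
  | cons j t ih => simp [birkSum, ih, wordComp_append]; ring

end basic

section contract
variable {J X : Type*} [MetricSpace J] [MetricSpace X]
  {γ : ℝ} (hγ0 : 0 < γ) (hγ1 : γ < 1)
  {φ : J → X → X}
  (hc : ∀ j₁ j₂ : J, ∀ x₁ x₂ : X,
      dist (φ j₁ x₁) (φ j₂ x₂) ≤ γ * (dist j₁ j₂ + dist x₁ x₂))

include hγ0 hγ1 hc

theorem dist_wordComp_le (ω : List J) (a b : X) :
    dist (wordComp φ ω a) (wordComp φ ω b) ≤ γ ^ ω.length * dist a b := by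
  induction ω with
  | nil => simp [wordComp]
  | cons j t ih =>
      have h1 := hc j j (wordComp φ t a) (wordComp φ t b)
      simp only [dist_self, zero_add] at h1
      calc dist (wordComp φ (j :: t) a) (wordComp φ (j :: t) b)
          ≤ γ * dist (wordComp φ t a) (wordComp φ t b) := h1
        _ ≤ γ * (γ ^ t.length * dist a b) := by
            exact mul_le_mul_of_nonneg_left ih hγ0.le
        _ = γ ^ (j :: t).length * dist a b := by
            simp [List.length_cons, pow_succ]; ring

theorem dist_wordComp_le' (ω : List J) (a b : X) :
    dist (wordComp φ ω a) (wordComp φ ω b) ≤ dist a b := by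
  refine le_trans (dist_wordComp_le hγ0 hγ1 hc ω a b) ?_
  have : γ ^ ω.length ≤ 1 := pow_le_one₀ hγ0.le hγ1.le
  nlinarith [dist_nonneg (x := a) (y := b)]

variable {q : J → X → ℝ} {C : ℝ}
  (hqLip : ∀ j : J, ∀ x₁ x₂ : X, |q j x₁ - q j x₂| ≤ C * dist x₁ x₂)

include hγ1 hqLip

theorem birkSum_lip (ω : List J) (a b : X) :
    |birkSum φ q 0 ω a - birkSum φ q 0 ω b|
      ≤ (max C 0 / (1 - γ)) * (1 - γ ^ ω.length) * dist a b := by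
  set K := max C 0 / (1 - γ) with hK
  have h1γ : (0:ℝ) < 1 - γ := by linarith
  have hKγ : max C 0 = K * (1 - γ) := by rw [hK, div_mul_cancel₀ _ h1γ.ne']
  have hC0 : 0 ≤ max C 0 := le_max_right _ _
  have hK0 : 0 ≤ K := div_nonneg hC0 h1γ.le
  induction ω with
  | nil => simp [birkSum]
  | cons j t ih =>
      have hq : |q j (wordComp φ t a) - q j (wordComp φ t b)|
          ≤ max C 0 * (γ ^ t.length * dist a b) := by
        calc |q j (wordComp φ t a) - q j (wordComp φ t b)|
            ≤ C * dist (wordComp φ t a) (wordComp φ t b) := hqLip j _ _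
          _ ≤ max C 0 * dist (wordComp φ t a) (wordComp φ t b) :=
              mul_le_mul_of_nonneg_right (le_max_left C 0) dist_nonneg
          _ ≤ max C 0 * (γ ^ t.length * dist a b) :=
              mul_le_mul_of_nonneg_left (dist_wordComp_le hγ0 hγ1 hc t a b) hC0
      have e : birkSum φ q 0 (j :: t) a - birkSum φ q 0 (j :: t) b
          = (q j (wordComp φ t a) - q j (wordComp φ t b))
            + (birkSum φ q 0 t a - birkSum φ q 0 t b) := by
        simp only [birkSum, sub_zero]; ring
      have habs : |birkSum φ q 0 (j :: t) a - birkSum φ q 0 (j :: t) b|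
          ≤ |q j (wordComp φ t a) - q j (wordComp φ t b)|
            + |birkSum φ q 0 t a - birkSum φ q 0 t b| := by
        rw [e]; exact abs_add_le _ _
      have hγn : (0:ℝ) ≤ γ ^ t.length := pow_nonneg hγ0.le _
      calc |birkSum φ q 0 (j :: t) a - birkSum φ q 0 (j :: t) b|
          ≤ max C 0 * (γ ^ t.length * dist a b) + K * (1 - γ ^ t.length) * dist a b :=
            by exact habs.trans (add_le_add hq ih)
        _ = K * (1 - γ ^ (j :: t).length) * dist a b := by
            simp only [List.length_cons, pow_succ]
            rw [hKγ]; ring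
end contract

section potbasic
variable {J X : Type*} [MetricSpace J] [MetricSpace X]

/-- the approximating set in the definition of the Mañé potential -/
def mset (φ : J → X → X) (q : J → X → ℝ) (x z : X) (ε : ℝ) : Set EReal :=
  {s : EReal | ∃ ω : List J, ω ≠ [] ∧ dist x (wordComp φ ω z) < ε ∧
      s = ((birkSum φ q 0 ω z : ℝ) : EReal)}

theorem manePot_eq (φ : J → X → X) (q : J → X → ℝ) (x z : X) :
    manePot φ q 0 x z = ⨅ (ε : ℝ) (_ : 0 < ε), sSup (mset φ q x z ε) := rfl

theorem ereal_le_of_forall_sub {r : ℝ} {a : EReal}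
    (h : ∀ δ : ℝ, 0 < δ → ((r - δ : ℝ) : EReal) ≤ a) : (r : EReal) ≤ a := by
  induction a using EReal.rec with
  | bot =>
      have := h 1 one_pos
      rw [le_bot_iff] at this
      exact absurd this (EReal.coe_ne_bot _)
  | coe t =>
      rw [EReal.coe_le_coe_iff]
      by_contra ht
      push_neg at ht
      have := EReal.coe_le_coe_iff.mp (h ((r - t)/2) (by linarith))
      linarith
  | top => exact le_top

theorem ereal_le_of_forall_add {a b : EReal}
    (h : ∀ δ : ℝ, 0 < δ → a ≤ b + (δ : ℝ)) : a ≤ b := by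
  induction b using EReal.rec with
  | bot =>
      have := h 1 one_pos
      rwa [EReal.bot_add] at this
  | coe t =>
      induction a using EReal.rec with
      | bot => exact bot_le
      | coe s =>
          rw [EReal.coe_le_coe_iff]
          by_contra hs
          push_neg at hs
          have := h ((s - t)/2) (by linarith)
          rw [← EReal.coe_add, EReal.coe_le_coe_iff] at this
          linarith
      | top =>
          have := h 1 one_pos
          rw [← EReal.coe_add, top_le_iff] at this
          exact absurd this (EReal.coe_ne_top _)
  | top => exact le_top

variable {φ : J → X → X} {q : J → X → ℝ}

theorem birkSum_nonpos (hq0 : ∀ j x, q j x ≤ 0) (ω : List J) (z : X) :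
    birkSum φ q 0 ω z ≤ 0 := by
  induction ω with
  | nil => simp [birkSum]
  | cons j t ih =>
      simp only [birkSum, sub_zero]
      have := hq0 j (wordComp φ t z)
      linarith

theorem manePot_nonpos (hq0 : ∀ j x, q j x ≤ 0) (x z : X) :
    manePot φ q 0 x z ≤ 0 := by
  rw [manePot_eq]
  refine le_trans (iInf₂_le 1 one_pos) (sSup_le ?_)
  rintro s ⟨ω, -, -, rfl⟩
  rw [show (0 : EReal) = ((0 : ℝ) : EReal) from rfl, EReal.coe_le_coe_iff]
  exact birkSum_nonpos hq0 ω z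

theorem manePot_ne_top (hq0 : ∀ j x, q j x ≤ 0) (x z : X) :
    manePot φ q 0 x z ≠ ⊤ := by
  intro h
  have := manePot_nonpos (φ := φ) hq0 x z
  rw [h, top_le_iff] at this
  exact absurd this (by decide)

/-- lower bound on the Mañé potential via approximate witnesses -/
theorem le_manePot {r : ℝ} {x z : X}
    (h : ∀ δ : ℝ, 0 < δ → ∀ ε : ℝ, 0 < ε → ∃ ω : List J, ω ≠ [] ∧
      dist x (wordComp φ ω z) < ε ∧ r - δ ≤ birkSum φ q 0 ω z) :
    (r : EReal) ≤ manePot φ q 0 x z := by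
  rw [manePot_eq]
  refine le_iInf₂ fun ε hε => ?_
  refine ereal_le_of_forall_sub fun δ hδ => ?_
  obtain ⟨ω, hne, hd, hb⟩ := h δ hδ ε hε
  exact le_sSup_of_le ⟨ω, hne, hd, rfl⟩ (EReal.coe_le_coe_iff.mpr hb)

/-- extraction of approximate witnesses from a lower bound -/
theorem manePot_lt_exists {c : EReal} {x z : X}
    (h : c < manePot φ q 0 x z) {ε : ℝ} (hε : 0 < ε) :
    ∃ ω : List J, ω ≠ [] ∧ dist x (wordComp φ ω z) < ε ∧
      c < ((birkSum φ q 0 ω z : ℝ) : EReal) := by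
  have h2 : c < sSup (mset φ q x z ε) :=
    lt_of_lt_of_le h (by rw [manePot_eq]; exact iInf₂_le ε hε)
  obtain ⟨s, ⟨ω, hne, hd, rfl⟩, hs⟩ := lt_sSup_iff.mp h2
  exact ⟨ω, hne, hd, hs⟩

theorem manePot_usc (z : X) :
    UpperSemicontinuous (fun x : X => manePot φ q 0 x z) := by
  intro x c hc
  change manePot φ q 0 x z < c at hc
  rw [manePot_eq] at hc
  rw [iInf_lt_iff] at hc
  obtain ⟨ε, hc⟩ := hc
  rw [iInf_lt_iff] at hc
  obtain ⟨hε, hc⟩ := hc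
  rw [Metric.eventually_nhds_iff]
  refine ⟨ε/2, by linarith, fun y hy => ?_⟩
  show manePot φ q 0 y z < c
  have hsub : mset φ q y z (ε/2) ⊆ mset φ q x z ε := by
    rintro s ⟨ω, hne, hd, rfl⟩
    refine ⟨ω, hne, ?_, rfl⟩
    calc dist x (wordComp φ ω z) ≤ dist x y + dist y (wordComp φ ω z) := dist_triangle _ _ _
      _ < ε/2 + ε/2 := by rw [dist_comm] at hy; exact add_lt_add_of_le_of_lt hy.le hd
      _ = ε := by ring
  calc manePot φ q 0 y z ≤ sSup (mset φ q y z (ε/2)) := by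
        rw [manePot_eq]; exact iInf₂_le _ (by linarith)
    _ ≤ sSup (mset φ q x z ε) := sSup_le_sSup hsub
    _ < c := hc
end potbasic

theorem EReal_bot_or_real {a : EReal} (h : a ≠ ⊤) : a = ⊥ ∨ ∃ r : ℝ, a = (r : EReal) := by
  induction a using EReal.rec with
  | bot => exact Or.inl rfl
  | coe t => exact Or.inr ⟨t, rfl⟩
  | top => exact absurd rfl h

section qfacts
variable {J X : Type*} [MetricSpace J] [MetricSpace X] [CompactSpace J] [Nonempty J]
  {q : J → X → ℝ}
  (hqnorm : ∀ x : X, (⨆ j : J, q j x) = 0)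
  (hqcont : Continuous fun p : J × X => q p.1 p.2)

include hqnorm hqcont

theorem q_nonpos (j : J) (x : X) : q j x ≤ 0 := by
  have hcont : Continuous fun j : J => q j x :=
    hqcont.comp (continuous_id.prodMk continuous_const)
  have hbdd : BddAbove (Set.range fun j : J => q j x) := (isCompact_range hcont).bddAbove
  have := le_ciSup hbdd j
  rwa [hqnorm x] at this

theorem q_exists_zero (x : X) : ∃ j : J, q j x = 0 := by
  have hcont : Continuous fun j : J => q j x :=
    hqcont.comp (continuous_id.prodMk continuous_const)
  obtain ⟨j₀, -, hj₀⟩ := isCompact_univ.exists_isMaxOn Set.univ_nonempty hcont.continuousOn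
  refine ⟨j₀, le_antisymm (q_nonpos hqnorm hqcont j₀ x) ?_⟩
  have : (⨆ j : J, q j x) ≤ q j₀ x := ciSup_le fun j => hj₀ (Set.mem_univ j)
  rwa [hqnorm x] at this

end qfacts

section main
variable {J X : Type*} [MetricSpace J] [MetricSpace X]
  {γ : ℝ} (hγ0 : 0 < γ) (hγ1 : γ < 1)
  {φ : J → X → X}
  (hc : ∀ j₁ j₂ : J, ∀ x₁ x₂ : X,
      dist (φ j₁ x₁) (φ j₂ x₂) ≤ γ * (dist j₁ j₂ + dist x₁ x₂))
  {q : J → X → ℝ} {C : ℝ}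
  (hqLip : ∀ j : J, ∀ x₁ x₂ : X, |q j x₁ - q j x₂| ≤ C * dist x₁ x₂)
  (hq0 : ∀ (j : J) (x : X), q j x ≤ 0)

include hγ0 hγ1 hc hqLip hq0

theorem manePot_triangle (x y z : X) :
    manePot φ q 0 x y + manePot φ q 0 y z ≤ manePot φ q 0 x z := by
  set K := max C 0 / (1 - γ) with hKdef
  have h1γ : (0:ℝ) < 1 - γ := by linarith
  have hK0 : 0 ≤ K := div_nonneg (le_max_right _ _) h1γ.le
  rcases EReal_bot_or_real (manePot_ne_top hq0 x y) with h1 | ⟨r1, h1⟩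
  · rw [h1, EReal.bot_add]; exact bot_le
  rcases EReal_bot_or_real (manePot_ne_top hq0 y z) with h2 | ⟨r2, h2⟩
  · rw [h2, EReal.add_bot]; exact bot_le
  rw [h1, h2, ← EReal.coe_add]
  apply le_manePot
  intro δ hδ ε hε
  have hε₂ : 0 < min (ε/2) (δ/(3*(K+1))) := by
    apply lt_min (by linarith)
    positivity
  set ε₂ := min (ε/2) (δ/(3*(K+1))) with hε₂def
  have hlt1 : ((r1 - δ/3 : ℝ) : EReal) < manePot φ q 0 x y := by
    rw [h1]; exact_mod_cast (by linarith : r1 - δ/3 < r1)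
  obtain ⟨ω₁, hne1, hd1, hb1⟩ := manePot_lt_exists hlt1 (by linarith : (0:ℝ) < ε/2)
  have hlt2 : ((r2 - δ/3 : ℝ) : EReal) < manePot φ q 0 y z := by
    rw [h2]; exact_mod_cast (by linarith : r2 - δ/3 < r2)
  obtain ⟨ω₂, hne2, hd2, hb2⟩ := manePot_lt_exists hlt2 hε₂
  rw [EReal.coe_lt_coe_iff] at hb1 hb2
  refine ⟨ω₁ ++ ω₂, by simp [hne1], ?_, ?_⟩
  · rw [wordComp_append]
    calc dist x (wordComp φ ω₁ (wordComp φ ω₂ z))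
        ≤ dist x (wordComp φ ω₁ y) + dist (wordComp φ ω₁ y) (wordComp φ ω₁ (wordComp φ ω₂ z)) :=
          dist_triangle _ _ _
      _ ≤ dist x (wordComp φ ω₁ y) + dist y (wordComp φ ω₂ z) := by
          have := dist_wordComp_le' hγ0 hγ1 hc ω₁ y (wordComp φ ω₂ z)
          linarith
      _ < ε/2 + ε₂ := add_lt_add hd1 hd2
      _ ≤ ε := by
          have := min_le_left (ε/2) (δ/(3*(K+1)))
          rw [← hε₂def] at this; linarith
  · rw [birkSum_append]
    have hlip := birkSum_lip hγ0 hγ1 hc hqLip ω₁ (wordComp φ ω₂ z) y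
    have hlip2 : |birkSum φ q 0 ω₁ (wordComp φ ω₂ z) - birkSum φ q 0 ω₁ y|
        ≤ K * dist (wordComp φ ω₂ z) y := by
      refine hlip.trans ?_
      have hγn : (0:ℝ) ≤ γ ^ ω₁.length := pow_nonneg hγ0.le _
      have hd0 : (0:ℝ) ≤ dist (wordComp φ ω₂ z) y := dist_nonneg
      rw [← hKdef]
      have h1' : 1 - γ ^ ω₁.length ≤ 1 := by linarith
      calc K * (1 - γ ^ ω₁.length) * dist (wordComp φ ω₂ z) y
          ≤ K * 1 * dist (wordComp φ ω₂ z) y :=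
            mul_le_mul_of_nonneg_right (mul_le_mul_of_nonneg_left h1' hK0) hd0
        _ = K * dist (wordComp φ ω₂ z) y := by ring
    have hdyz : dist (wordComp φ ω₂ z) y ≤ ε₂ := by rw [dist_comm]; exact hd2.le
    have hKe : K * ε₂ ≤ δ/3 := by
      have h1' : K * ε₂ ≤ K * (δ/(3*(K+1))) :=
        mul_le_mul_of_nonneg_left (min_le_right _ _) hK0
      have hK1 : K + 1 ≠ 0 := by positivity
      have h2' : K * (δ/(3*(K+1))) = (K/(K+1)) * (δ/3) := by
        field_simp
      have h3' : K/(K+1) ≤ 1 := (div_le_one (by linarith)).mpr (by linarith)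
      nlinarith
    have habs := abs_le.mp hlip2
    have hKd : K * dist (wordComp φ ω₂ z) y ≤ δ/3 :=
      le_trans (mul_le_mul_of_nonneg_left hdyz hK0) hKe
    linarith [habs.1]

theorem manePot_step (j : J) (y z : X) :
    ((q j y : ℝ) : EReal) + manePot φ q 0 y z ≤ manePot φ q 0 (φ j y) z := by
  set C' := max C 0 with hC'def
  have hC'0 : (0:ℝ) ≤ C' := le_max_right _ _
  rcases EReal_bot_or_real (manePot_ne_top hq0 y z) with h1 | ⟨r, h1⟩
  · rw [h1, EReal.add_bot]; exact bot_le
  rw [h1, ← EReal.coe_add]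
  apply le_manePot
  intro δ hδ ε hε
  have hε₂ : 0 < min ε (δ/(2*(C'+1))) := by
    apply lt_min hε; positivity
  set ε₂ := min ε (δ/(2*(C'+1))) with hε₂def
  have hlt : ((r - δ/2 : ℝ) : EReal) < manePot φ q 0 y z := by
    rw [h1]; exact_mod_cast (by linarith : r - δ/2 < r)
  obtain ⟨ω, hne, hd, hb⟩ := manePot_lt_exists hlt hε₂
  rw [EReal.coe_lt_coe_iff] at hb
  refine ⟨j :: ω, by simp, ?_, ?_⟩
  · show dist (φ j y) (φ j (wordComp φ ω z)) < ε
    have := hc j j y (wordComp φ ω z)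
    simp only [dist_self, zero_add] at this
    have h2 : γ * dist y (wordComp φ ω z) ≤ dist y (wordComp φ ω z) := by
      nlinarith [dist_nonneg (x := y) (y := wordComp φ ω z)]
    have h3 : dist y (wordComp φ ω z) < ε := lt_of_lt_of_le hd (min_le_left _ _)
    linarith
  · show q j y + r - δ ≤ birkSum φ q 0 (j :: ω) z
    have hdy : dist y (wordComp φ ω z) ≤ ε₂ := hd.le
    have hq1 : |q j y - q j (wordComp φ ω z)| ≤ C' * ε₂ := by
      refine le_trans (hqLip j _ _) ?_
      have : C * dist y (wordComp φ ω z) ≤ C' * dist y (wordComp φ ω z) :=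
        mul_le_mul_of_nonneg_right (le_max_left _ _) dist_nonneg
      refine this.trans (mul_le_mul_of_nonneg_left hdy hC'0)
    have hCe : C' * ε₂ ≤ δ/2 := by
      have h1' : C' * ε₂ ≤ C' * (δ/(2*(C'+1))) :=
        mul_le_mul_of_nonneg_left (min_le_right _ _) hC'0
      have hC1 : C' + 1 ≠ 0 := by positivity
      have h2' : C' * (δ/(2*(C'+1))) = (C'/(C'+1)) * (δ/2) := by
        field_simp
      have h3' : C'/(C'+1) ≤ 1 := (div_le_one (by linarith)).mpr (by linarith)
      nlinarith
    have habs := abs_le.mp hq1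
    show q j y + r - δ ≤ q j (wordComp φ ω z) - 0 + birkSum φ q 0 ω z
    linarith [habs.1]
end main

/-- word `[js (k+m-1), …, js k]`, mapping the `k`-th point of a forward orbit to the `k+m`-th -/
def fwdWord {J : Type*} (js : ℕ → J) : ℕ → ℕ → List J
  | _, 0 => []
  | k, m+1 => js (k+m) :: fwdWord js k m

/-- word `[js k, …, js (k+m-1)]`, mapping the `k+m`-th point of a backward orbit to the `k`-th -/
def bwdWord {J : Type*} (js : ℕ → J) : ℕ → ℕ → List J
  | _, 0 => []
  | k, m+1 => js k :: bwdWord js (k+1) m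

section words
variable {J X : Type*} (φ : J → X → X) (q : J → X → ℝ) (js : ℕ → J) (xs : ℕ → X)

theorem fwdWord_ne_nil {js : ℕ → J} {k m : ℕ} (hm : m ≠ 0) : fwdWord js k m ≠ [] := by
  cases m with
  | zero => exact absurd rfl hm
  | succ m => simp [fwdWord]

theorem bwdWord_ne_nil {js : ℕ → J} {k m : ℕ} (hm : m ≠ 0) : bwdWord js k m ≠ [] := by
  cases m with
  | zero => exact absurd rfl hm
  | succ m => simp [bwdWord]

theorem fwdWord_comp (horb : ∀ n, xs (n+1) = φ (js n) (xs n)) (k m : ℕ) :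
    wordComp φ (fwdWord js k m) (xs k) = xs (k+m) := by
  induction m with
  | zero => rfl
  | succ m ih =>
      show φ (js (k+m)) (wordComp φ (fwdWord js k m) (xs k)) = xs (k+m+1)
      rw [ih, ← horb (k+m)]

theorem fwdWord_birk (horb : ∀ n, xs (n+1) = φ (js n) (xs n)) (k m : ℕ) :
    birkSum φ q 0 (fwdWord js k m) (xs k) = ∑ i ∈ Finset.range m, q (js (k+i)) (xs (k+i)) := by
  induction m with
  | zero => simp [fwdWord, birkSum]
  | succ m ih =>
      show q (js (k+m)) (wordComp φ (fwdWord js k m) (xs k)) - 0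
          + birkSum φ q 0 (fwdWord js k m) (xs k) = _
      rw [fwdWord_comp φ js xs horb, ih, Finset.sum_range_succ, sub_zero, add_comm]

theorem bwdWord_comp (horb : ∀ n, φ (js n) (xs (n+1)) = xs n) (k m : ℕ) :
    wordComp φ (bwdWord js k m) (xs (k+m)) = xs k := by
  induction m generalizing k with
  | zero => rfl
  | succ m ih =>
      show φ (js k) (wordComp φ (bwdWord js (k+1) m) (xs (k+m+1))) = xs k
      have e : k+m+1 = (k+1)+m := by ring
      rw [e, ih (k+1), horb k]

theorem bwdWord_birk (horb : ∀ n, φ (js n) (xs (n+1)) = xs n) (k m : ℕ) :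
    birkSum φ q 0 (bwdWord js k m) (xs (k+m))
      = ∑ i ∈ Finset.range m, q (js (k+i)) (xs (k+i+1)) := by
  induction m generalizing k with
  | zero => simp [bwdWord, birkSum]
  | succ m ih =>
      show q (js k) (wordComp φ (bwdWord js (k+1) m) (xs (k+m+1))) - 0
          + birkSum φ q 0 (bwdWord js (k+1) m) (xs (k+m+1)) = _
      have e : k+m+1 = (k+1)+m := by ring
      rw [e, bwdWord_comp φ js xs horb (k+1) m, ih (k+1), sub_zero, Finset.sum_range_succ']
      rw [add_comm]
      have hsum : ∑ i ∈ Finset.range m, q (js (k+1+i)) (xs (k+1+i+1))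
          = ∑ i ∈ Finset.range m, q (js (k+(i+1))) (xs (k+(i+1)+1)) :=
        Finset.sum_congr rfl fun i _ => by
          rw [show k+1+i = k+(i+1) from by ring]
      rw [hsum]
      norm_num

end words

section invlemmas
variable {J X : Type*} [MetricSpace J] [MetricSpace X]
  {φ : J → X → X} {q : J → X → ℝ} {lam : X → EReal}
  (hinv : ∀ x : X, (⨆ (p : J × X) (_ : φ p.1 p.2 = x),
        ((q p.1 p.2 : ℝ) : EReal) + lam p.2) = lam x)

include hinv

theorem lam_step (j : J) (y : X) : ((q j y : ℝ) : EReal) + lam y ≤ lam (φ j y) := by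
  rw [← hinv (φ j y)]
  exact le_iSup₂ (f := fun (p : J × X) (_ : φ p.1 p.2 = φ j y) =>
    ((q p.1 p.2 : ℝ) : EReal) + lam p.2) (j, y) rfl

theorem lam_word (ω : List J) (y : X) :
    ((birkSum φ q 0 ω y : ℝ) : EReal) + lam y ≤ lam (wordComp φ ω y) := by
  induction ω with
  | nil =>
      show ((0:ℝ) : EReal) + lam y ≤ lam y
      rw [EReal.coe_zero, zero_add]
  | cons j t ih =>
      have h1 : ((birkSum φ q 0 (j::t) y : ℝ) : EReal) + lam y
          = ((q j (wordComp φ t y) : ℝ) : EReal) + (((birkSum φ q 0 t y : ℝ) : EReal) + lam y) := by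
        show ((q j (wordComp φ t y) - 0 + birkSum φ q 0 t y : ℝ) : EReal) + lam y = _
        rw [sub_zero, EReal.coe_add, add_assoc]
      rw [h1]
      calc ((q j (wordComp φ t y) : ℝ) : EReal) + (((birkSum φ q 0 t y : ℝ) : EReal) + lam y)
          ≤ ((q j (wordComp φ t y) : ℝ) : EReal) + lam (wordComp φ t y) := add_le_add_right ih _
        _ ≤ lam (φ j (wordComp φ t y)) := lam_step hinv j _
        _ = lam (wordComp φ (j::t) y) := rfl

variable (hq0 : ∀ (j : J) (x : X), q j x ≤ 0)
  (husc : UpperSemicontinuous lam) (hsup : (⨆ x : X, lam x) = 0)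

include hq0 husc hsup

theorem lam_ge_manePot (x z : X) : manePot φ q 0 x z + lam z ≤ lam x := by
  rcases EReal_bot_or_real (manePot_ne_top hq0 x z) with h1 | ⟨r, h1⟩
  · rw [h1, EReal.bot_add]; exact bot_le
  have hzle : lam z ≤ 0 := by rw [← hsup]; exact le_iSup lam z
  have hzlt : lam z ≠ ⊤ := ne_top_of_le_ne_top (by simp) hzle
  rcases EReal_bot_or_real hzlt with h2 | ⟨m, h2⟩
  · rw [h2, EReal.add_bot]; exact bot_le
  rw [h1, h2, ← EReal.coe_add]
  by_contra hlt
  push_neg at hlt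
  have hxle : lam x ≤ 0 := by rw [← hsup]; exact le_iSup lam x
  have hxlt : lam x ≠ ⊤ := ne_top_of_le_ne_top (by simp) hxle
  obtain ⟨c, hlamc, hcrm⟩ : ∃ c : ℝ, lam x < (c : EReal) ∧ c < r + m := by
    rcases EReal_bot_or_real hxlt with hx | ⟨t, hx⟩
    · exact ⟨r + m - 1, by rw [hx]; exact EReal.bot_lt_coe _, by linarith⟩
    · have ht : t < r + m := by rw [hx] at hlt; exact_mod_cast hlt
      exact ⟨(t + (r+m))/2, by rw [hx]; exact_mod_cast (by linarith : t < (t+(r+m))/2),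
        by linarith⟩
  have hev := husc x (c : EReal) hlamc
  rw [Metric.eventually_nhds_iff] at hev
  obtain ⟨ε, hε, hball⟩ := hev
  have hlt2 : ((c - m : ℝ) : EReal) < manePot φ q 0 x z := by
    rw [h1]; exact_mod_cast (by linarith : c - m < r)
  obtain ⟨ω, hne, hd, hb⟩ := manePot_lt_exists hlt2 hε
  rw [EReal.coe_lt_coe_iff] at hb
  have hup := lam_word hinv ω z
  have hsmall : lam (wordComp φ ω z) < (c : EReal) := by
    refine hball ?_
    rw [dist_comm]; exact hd
  have hbig : (c : EReal) < lam (wordComp φ ω z) := by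
    calc (c : EReal) < ((birkSum φ q 0 ω z + m : ℝ) : EReal) := by
          exact_mod_cast (by linarith : c < birkSum φ q 0 ω z + m)
      _ = ((birkSum φ q 0 ω z : ℝ) : EReal) + lam z := by rw [EReal.coe_add, h2]
      _ ≤ lam (wordComp φ ω z) := hup
  exact absurd hsmall (not_lt_of_gt hbig)

end invlemmas

section aubrysec
variable {J X : Type*} [MetricSpace J] [MetricSpace X]
  {γ : ℝ} (hγ0 : 0 < γ) (hγ1 : γ < 1)
  {φ : J → X → X}
  (hc : ∀ j₁ j₂ : J, ∀ x₁ x₂ : X,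
      dist (φ j₁ x₁) (φ j₂ x₂) ≤ γ * (dist j₁ j₂ + dist x₁ x₂))
  {q : J → X → ℝ} {C : ℝ}
  (hqLip : ∀ j : J, ∀ x₁ x₂ : X, |q j x₁ - q j x₂| ≤ C * dist x₁ x₂)
  (hq0 : ∀ (j : J) (x : X), q j x ≤ 0)

include hγ0 hγ1 hc hqLip hq0

/-- the criterion for membership in the Aubry set -/
theorem aubry_of {z : X}
    (h : ∀ δ : ℝ, 0 < δ → ∀ ε : ℝ, 0 < ε → ∃ ω : List J, ∃ a : X, ω ≠ [] ∧
      dist a z < ε ∧ dist (wordComp φ ω a) z < ε ∧ -δ ≤ birkSum φ q 0 ω a) :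
    manePot φ q 0 z z = 0 := by
  set K := max C 0 / (1 - γ) with hKdef
  have h1γ : (0:ℝ) < 1 - γ := by linarith
  have hK0 : 0 ≤ K := div_nonneg (le_max_right _ _) h1γ.le
  refine le_antisymm (manePot_nonpos hq0 z z) ?_
  rw [show (0 : EReal) = ((0:ℝ) : EReal) from rfl]
  apply le_manePot
  intro δ hδ ε hε
  have hε₂ : 0 < min (ε/2) (δ/(2*(K+1))) := lt_min (by linarith) (by positivity)
  set ε₂ := min (ε/2) (δ/(2*(K+1))) with hε₂def
  obtain ⟨ω, a, hne, hda, hdWa, hb⟩ := h (δ/2) (by linarith) ε₂ hε₂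
  refine ⟨ω, hne, ?_, ?_⟩
  · calc dist z (wordComp φ ω z)
        ≤ dist z (wordComp φ ω a) + dist (wordComp φ ω a) (wordComp φ ω z) :=
          dist_triangle _ _ _
      _ ≤ dist z (wordComp φ ω a) + dist a z := by
          have := dist_wordComp_le' hγ0 hγ1 hc ω a z
          linarith
      _ < ε₂ + ε₂ := by rw [dist_comm z]; exact add_lt_add hdWa hda
      _ ≤ ε := by
          have := min_le_left (ε/2) (δ/(2*(K+1)))
          rw [← hε₂def] at this; linarith
  · have hlip := birkSum_lip hγ0 hγ1 hc hqLip ω z a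
    have hγn : (0:ℝ) ≤ γ ^ ω.length := pow_nonneg hγ0.le _
    have hlip2 : |birkSum φ q 0 ω z - birkSum φ q 0 ω a| ≤ K * dist z a := by
      refine hlip.trans ?_
      rw [← hKdef]
      have h1' : 1 - γ ^ ω.length ≤ 1 := by linarith
      calc K * (1 - γ ^ ω.length) * dist z a ≤ K * 1 * dist z a :=
            mul_le_mul_of_nonneg_right (mul_le_mul_of_nonneg_left h1' hK0) dist_nonneg
        _ = K * dist z a := by ring
    have hdza : dist z a ≤ ε₂ := by rw [dist_comm]; exact hda.le
    have hKe : K * ε₂ ≤ δ/2 := by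
      have h1' : K * ε₂ ≤ K * (δ/(2*(K+1))) :=
        mul_le_mul_of_nonneg_left (min_le_right _ _) hK0
      have hK1 : K + 1 ≠ 0 := by positivity
      have h2' : K * (δ/(2*(K+1))) = (K/(K+1)) * (δ/2) := by
        field_simp
      have h3' : K/(K+1) ≤ 1 := (div_le_one (by linarith)).mpr (by linarith)
      nlinarith
    have habs := abs_le.mp hlip2
    have hKd : K * dist z a ≤ δ/2 := le_trans (mul_le_mul_of_nonneg_left hdza hK0) hKe
    linarith [habs.1]

/-- the Aubry set is nonempty -/
theorem aubry_nonempty [CompactSpace J] [CompactSpace X] [Nonempty J] [Nonempty X]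
    (hqnorm : ∀ x : X, (⨆ j : J, q j x) = 0)
    (hqcont : Continuous fun p : J × X => q p.1 p.2) :
    ∃ z : X, manePot φ q 0 z z = 0 := by
  have hA : ∀ x : X, ∃ j : J, q j x = 0 := q_exists_zero hqnorm hqcont
  choose g hg using hA
  let xs : ℕ → X := fun n => Nat.rec (Classical.arbitrary X) (fun _ xk => φ (g xk) xk) n
  have horb : ∀ n, xs (n+1) = φ (g (xs n)) (xs n) := fun n => rfl
  set js : ℕ → J := fun n => g (xs n) with hjs
  obtain ⟨z, -, ψ, hψ, hz⟩ := isCompact_univ.tendsto_subseq (fun n => Set.mem_univ (xs n))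
  refine ⟨z, aubry_of hγ0 hγ1 hc hqLip hq0 ?_⟩
  intro δ hδ ε hε
  obtain ⟨N, hN⟩ := Metric.tendsto_atTop.mp hz ε hε
  have hmono := hψ.lt_iff_lt.mpr (by omega : N < N+1)
  refine ⟨fwdWord js (ψ N) (ψ (N+1) - ψ N), xs (ψ N), fwdWord_ne_nil (by omega), ?_, ?_, ?_⟩
  · exact hN N le_rfl
  · rw [fwdWord_comp φ js xs horb, Nat.add_sub_cancel' hmono.le]
    exact hN (N+1) (by omega)
  · rw [fwdWord_birk φ q js xs horb]
    have : ∀ i ∈ Finset.range (ψ (N+1) - ψ N), q (js (ψ N + i)) (xs (ψ N + i)) = 0 :=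
      fun i _ => hg (xs (ψ N + i))
    rw [Finset.sum_congr rfl this, Finset.sum_const_zero]
    linarith
end aubrysec

section invge
variable {J X : Type*} [MetricSpace J] [MetricSpace X] [CompactSpace J] [CompactSpace X]
  {γ : ℝ} (hγ0 : 0 < γ) (hγ1 : γ < 1)
  {φ : J → X → X}
  (hc : ∀ j₁ j₂ : J, ∀ x₁ x₂ : X,
      dist (φ j₁ x₁) (φ j₂ x₂) ≤ γ * (dist j₁ j₂ + dist x₁ x₂))
  {q : J → X → ℝ} {C : ℝ}
  (hqLip : ∀ j : J, ∀ x₁ x₂ : X, |q j x₁ - q j x₂| ≤ C * dist x₁ x₂)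
  (hq0 : ∀ (j : J) (x : X), q j x ≤ 0)
  (hqcont : Continuous fun p : J × X => q p.1 p.2)

include hγ0 hγ1 hc hqLip hq0 hqcont

theorem manePot_inv_ge {z : X} (hz : manePot φ q 0 z z = 0) (x : X) :
    manePot φ q 0 x z ≤ ⨆ (p : J × X) (_ : φ p.1 p.2 = x),
      ((q p.1 p.2 : ℝ) : EReal) + manePot φ q 0 p.2 z := by
  rcases EReal_bot_or_real (manePot_ne_top hq0 x z) with h1 | ⟨r, h1⟩
  · rw [h1]; exact bot_le
  have hwit : ∀ n : ℕ, ∃ ω : List J, ω ≠ [] ∧ dist x (wordComp φ ω z) < 1/(n+1) ∧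
      r - 1/(n+1) < birkSum φ q 0 ω z := by
    intro n
    have hpos : (0:ℝ) < 1/((n:ℝ)+1) := by positivity
    have hlt : ((r - 1/((n:ℝ)+1) : ℝ) : EReal) < manePot φ q 0 x z := by
      rw [h1]; exact_mod_cast (by linarith : r - 1/((n:ℝ)+1) < r)
    obtain ⟨ω, hne, hdd, hbb⟩ := manePot_lt_exists hlt hpos
    exact ⟨ω, hne, hdd, by exact_mod_cast hbb⟩
  choose ω hne hd hb using hwit
  set jf : ℕ → J := fun n => (ω n).head (hne n) with hjf
  set tf : ℕ → List J := fun n => (ω n).tail with htf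
  have hcons : ∀ n, jf n :: tf n = ω n := fun n => List.cons_head_tail (hne n)
  set yf : ℕ → X := fun n => wordComp φ (tf n) z with hyf
  have hWy : ∀ n, wordComp φ (ω n) z = φ (jf n) (yf n) := fun n => by
    rw [← hcons n]; rfl
  have hBdecomp : ∀ n, birkSum φ q 0 (ω n) z
      = q (jf n) (yf n) + birkSum φ q 0 (tf n) z := by
    intro n
    rw [← hcons n]
    show q (jf n) (wordComp φ (tf n) z) - 0 + birkSum φ q 0 (tf n) z = _
    rw [sub_zero]
  obtain ⟨⟨j₀, y₀⟩, -, ψ, hψ, htend⟩ := isCompact_univ.tendsto_subseq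
    (fun n => Set.mem_univ ((jf n, yf n) : J × X))
  have hjt : Tendsto (fun i => jf (ψ i)) atTop (𝓝 j₀) :=
    (continuous_fst.tendsto _).comp htend
  have hyt : Tendsto (fun i => yf (ψ i)) atTop (𝓝 y₀) :=
    (continuous_snd.tendsto _).comp htend
  have hinv1 : ∀ n : ℕ, 1/((ψ n : ℝ)+1) ≤ 1/((n:ℝ)+1) := by
    intro n
    have h1' : (n:ℝ) + 1 ≤ (ψ n : ℝ) + 1 := by
      have := hψ.le_apply (x := n); push_cast; exact_mod_cast by omega
    exact one_div_le_one_div_of_le (by positivity) h1'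
  have hφx : φ j₀ y₀ = x := by
    have t1 : Tendsto (fun i => φ (jf (ψ i)) (yf (ψ i))) atTop (𝓝 x) := by
      rw [tendsto_iff_dist_tendsto_zero]
      refine squeeze_zero (fun i => dist_nonneg) (fun i => ?_)
        tendsto_one_div_add_atTop_nhds_zero_nat
      have := hd (ψ i)
      rw [hWy (ψ i)] at this
      rw [dist_comm]
      exact le_trans this.le (hinv1 i)
    have t2 : Tendsto (fun i => φ (jf (ψ i)) (yf (ψ i))) atTop (𝓝 (φ j₀ y₀)) := by
      rw [tendsto_iff_dist_tendsto_zero]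
      have hsum : Tendsto (fun i => γ * (dist (jf (ψ i)) j₀ + dist (yf (ψ i)) y₀))
          atTop (𝓝 (γ * (dist j₀ j₀ + dist y₀ y₀))) :=
        tendsto_const_nhds.mul ((hjt.dist tendsto_const_nhds).add
          (hyt.dist tendsto_const_nhds))
      simp only [dist_self, add_zero, mul_zero] at hsum
      exact squeeze_zero (fun i => dist_nonneg) (fun i => hc _ _ _ _) hsum
    exact tendsto_nhds_unique t2 t1
  have hclaim : (r : EReal) ≤ ((q j₀ y₀ : ℝ) : EReal) + manePot φ q 0 y₀ z := by
    have hcases : (∃ᶠ i in atTop, tf (ψ i) = []) ∨ (∃ᶠ i in atTop, tf (ψ i) ≠ []) := by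
      rw [← frequently_or_distrib]
      exact Filter.Eventually.frequently (Filter.Eventually.of_forall fun i => em _)
    rcases hcases with hA | hB
    · obtain ⟨θ, hθ, hθe⟩ := extraction_of_frequently_atTop hA
      have hyz : ∀ i, yf (ψ (θ i)) = z := fun i => by
        show wordComp φ (tf (ψ (θ i))) z = z
        rw [hθe i]
        rfl
      have hy₀ : y₀ = z := by
        have t3 : Tendsto (fun i => yf (ψ (θ i))) atTop (𝓝 y₀) :=
          hyt.comp hθ.tendsto_atTop
        have t4 : (fun i => yf (ψ (θ i))) = fun _ => z := funext hyz
        rw [t4] at t3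
        exact (tendsto_nhds_unique tendsto_const_nhds t3).symm
      have hq1 : ∀ i : ℕ, r - 1/((i:ℝ)+1) ≤ q (jf (ψ (θ i))) z := by
        intro i
        have hbn := hb (ψ (θ i))
        rw [hBdecomp (ψ (θ i)), hyz i] at hbn
        have hbt : birkSum φ q 0 (tf (ψ (θ i))) z = 0 := by rw [hθe i]; rfl
        rw [hbt, add_zero] at hbn
        have h5 : 1/((ψ (θ i) : ℝ)+1) ≤ 1/((θ i:ℝ)+1) := hinv1 (θ i)
        have h6 : 1/((θ i:ℝ)+1) ≤ 1/((i:ℝ)+1) := by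
          refine one_div_le_one_div_of_le (by positivity) ?_
          have := hθ.le_apply (x := i); exact_mod_cast by omega
        linarith
      have hqlim : Tendsto (fun i => q (jf (ψ (θ i))) z) atTop (𝓝 (q j₀ z)) :=
        (hqcont.tendsto (j₀, z)).comp
          ((hjt.comp hθ.tendsto_atTop).prodMk_nhds tendsto_const_nhds)
      have hrlim : Tendsto (fun i : ℕ => r - 1/((i:ℝ)+1)) atTop (𝓝 r) := by
        have := tendsto_const_nhds (x := r) (f := atTop (α := ℕ)) |>.sub
          tendsto_one_div_add_atTop_nhds_zero_nat
        simpa using this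
      have hrq : r ≤ q j₀ z := le_of_tendsto_of_tendsto' hrlim hqlim hq1
      rw [hy₀, hz, add_zero]
      exact_mod_cast hrq
    · obtain ⟨θ, hθ, hθe⟩ := extraction_of_frequently_atTop hB
      have hqt : Tendsto (fun i => q (jf (ψ (θ i))) (yf (ψ (θ i)))) atTop (𝓝 (q j₀ y₀)) :=
        (hqcont.tendsto (j₀, y₀)).comp
          ((hjt.comp hθ.tendsto_atTop).prodMk_nhds (hyt.comp hθ.tendsto_atTop))
      have key : ((r - q j₀ y₀ : ℝ) : EReal) ≤ manePot φ q 0 y₀ z := by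
        apply le_manePot
        intro δ hδ ε hε
        have e1 : ∀ᶠ i : ℕ in atTop, dist (yf (ψ (θ i))) y₀ < ε := by
          have := (hyt.comp hθ.tendsto_atTop)
          exact this (Metric.ball_mem_nhds y₀ hε)
        have e2 : ∀ᶠ i : ℕ in atTop, |q (jf (ψ (θ i))) (yf (ψ (θ i))) - q j₀ y₀| < δ/2 := by
          have := Metric.tendsto_atTop.mp hqt (δ/2) (by linarith)
          obtain ⟨N, hN⟩ := this
          refine eventually_atTop.mpr ⟨N, fun i hi => ?_⟩
          have := hN i hi
          rwa [Real.dist_eq] at this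
        have e3 : ∀ᶠ i : ℕ in atTop, 1/((i:ℝ)+1) < δ/2 := by
          obtain ⟨N, hN⟩ := Metric.tendsto_atTop.mp
            (tendsto_one_div_add_atTop_nhds_zero_nat (𝕜 := ℝ)) (δ/2) (by linarith)
          refine eventually_atTop.mpr ⟨N, fun i hi => ?_⟩
          have h8 := hN i hi
          rw [Real.dist_eq, sub_zero] at h8
          have h7 : (0:ℝ) < 1/((i:ℝ)+1) := by positivity
          rwa [abs_of_pos h7] at h8
        obtain ⟨i, ⟨hi1, hi2⟩, hi3⟩ := ((e1.and e2).and e3).exists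
        refine ⟨tf (ψ (θ i)), hθe i, ?_, ?_⟩
        · show dist y₀ (wordComp φ (tf (ψ (θ i))) z) < ε
          rw [dist_comm]
          exact hi1
        · have hbn := hb (ψ (θ i))
          rw [hBdecomp (ψ (θ i))] at hbn
          have h5 : 1/((ψ (θ i) : ℝ)+1) ≤ 1/((i:ℝ)+1) := by
            refine one_div_le_one_div_of_le (by positivity) ?_
            have h6 := hθ.le_apply (x := i)
            have h7 := hψ.le_apply (x := θ i)
            exact_mod_cast by omega
          have habs := abs_lt.mp hi2
          show r - q j₀ y₀ - δ ≤ birkSum φ q 0 (tf (ψ (θ i))) z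
          linarith
      calc (r : EReal) = ((q j₀ y₀ + (r - q j₀ y₀) : ℝ) : EReal) := by norm_num
        _ = ((q j₀ y₀ : ℝ) : EReal) + ((r - q j₀ y₀ : ℝ) : EReal) := EReal.coe_add _ _
        _ ≤ ((q j₀ y₀ : ℝ) : EReal) + manePot φ q 0 y₀ z := add_le_add_right key _
  rw [h1]
  exact le_trans hclaim (le_iSup₂ (f := fun (p : J × X) (_ : φ p.1 p.2 = x) =>
    ((q p.1 p.2 : ℝ) : EReal) + manePot φ q 0 p.2 z) (j₀, y₀) hφx)

end invge

section lipp
variable {J X : Type*} [MetricSpace J] [MetricSpace X]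
  {γ : ℝ} (hγ0 : 0 < γ) (hγ1 : γ < 1)
  {φ : J → X → X}
  (hc : ∀ j₁ j₂ : J, ∀ x₁ x₂ : X,
      dist (φ j₁ x₁) (φ j₂ x₂) ≤ γ * (dist j₁ j₂ + dist x₁ x₂))
  {q : J → X → ℝ} {C : ℝ}
  (hqLip : ∀ j : J, ∀ x₁ x₂ : X, |q j x₁ - q j x₂| ≤ C * dist x₁ x₂)

include hγ0 hγ1 hc hqLip

theorem birkSum_lip' (ω : List J) (a b : X) :
    |birkSum φ q 0 ω a - birkSum φ q 0 ω b| ≤ (max C 0 / (1 - γ)) * dist a b := by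
  have h1γ : (0:ℝ) < 1 - γ := by linarith
  have hK0 : (0:ℝ) ≤ max C 0 / (1 - γ) := div_nonneg (le_max_right _ _) h1γ.le
  refine (birkSum_lip hγ0 hγ1 hc hqLip ω a b).trans ?_
  have h1' : 1 - γ ^ ω.length ≤ 1 := by
    have : (0:ℝ) ≤ γ ^ ω.length := pow_nonneg hγ0.le _
    linarith
  calc (max C 0 / (1 - γ)) * (1 - γ ^ ω.length) * dist a b
      ≤ (max C 0 / (1 - γ)) * 1 * dist a b :=
        mul_le_mul_of_nonneg_right (mul_le_mul_of_nonneg_left h1' hK0) dist_nonneg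
    _ = (max C 0 / (1 - γ)) * dist a b := by ring

end lipp

section step2sec
variable {J X : Type*} [MetricSpace J] [MetricSpace X] [CompactSpace J] [CompactSpace X]
  {γ : ℝ} (hγ0 : 0 < γ) (hγ1 : γ < 1)
  {φ : J → X → X}
  (hc : ∀ j₁ j₂ : J, ∀ x₁ x₂ : X,
      dist (φ j₁ x₁) (φ j₂ x₂) ≤ γ * (dist j₁ j₂ + dist x₁ x₂))
  {q : J → X → ℝ} {C : ℝ}
  (hqLip : ∀ j : J, ∀ x₁ x₂ : X, |q j x₁ - q j x₂| ≤ C * dist x₁ x₂)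
  (hq0 : ∀ (j : J) (x : X), q j x ≤ 0)
  {lam : X → EReal}
  (husc : UpperSemicontinuous lam) (hsup : (⨆ x : X, lam x) = 0)
  (hinv : ∀ x : X, (⨆ (p : J × X) (_ : φ p.1 p.2 = x),
        ((q p.1 p.2 : ℝ) : EReal) + lam p.2) = lam x)

include hγ0 hγ1 hc hqLip hq0 husc hsup hinv

theorem step2 (x : X) (hx : lam x ≠ ⊥) (δ : ℝ) (hδ : 0 < δ) :
    ∃ z : X, manePot φ q 0 z z = 0 ∧
      lam x ≤ manePot φ q 0 x z + lam z + ((δ : ℝ) : EReal) := by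
  have lam_le0 : ∀ y : X, lam y ≤ 0 := fun y => by rw [← hsup]; exact le_iSup lam y
  have lam_ne_top : ∀ y : X, lam y ≠ ⊤ := fun y =>
    ne_top_of_le_ne_top (by simp) (lam_le0 y)
  have lamreal : ∀ y : X, lam y ≠ ⊥ → ∃ s : ℝ, lam y = (s : EReal) := fun y hy => by
    rcases EReal_bot_or_real (lam_ne_top y) with h | h
    · exact absurd h hy
    · exact h
  -- the one-step backward selection
  have step : ∀ (k : ℕ) (y : X), lam y ≠ ⊥ → ∃ p : J × X, φ p.1 p.2 = y ∧ lam p.2 ≠ ⊥ ∧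
      lam y ≤ ((q p.1 p.2 : ℝ) : EReal) + lam p.2 + ((δ/2^(k+1) : ℝ) : EReal) := by
    intro k y hy
    obtain ⟨s, hs⟩ := lamreal y hy
    have hd2 : (0:ℝ) < δ/2^(k+1) := by positivity
    have hlt : ((s - δ/2^(k+1) : ℝ) : EReal) < lam y := by
      rw [hs]; exact_mod_cast (by linarith : s - δ/2^(k+1) < s)
    rw [← hinv y, lt_iSup_iff] at hlt
    obtain ⟨p, hlt⟩ := hlt
    rw [lt_iSup_iff] at hlt
    obtain ⟨hp, hlt⟩ := hlt
    have hpne : lam p.2 ≠ ⊥ := by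
      intro hbot
      rw [hbot, EReal.add_bot] at hlt
      exact absurd hlt (not_lt_bot)
    obtain ⟨t, ht⟩ := lamreal p.2 hpne
    refine ⟨p, hp, hpne, ?_⟩
    rw [ht] at hlt
    rw [← EReal.coe_add, EReal.coe_lt_coe_iff] at hlt
    rw [hs, ht, ← EReal.coe_add, ← EReal.coe_add, EReal.coe_le_coe_iff]
    linarith
  -- the backward orbit
  let σ : ℕ → {y : X // lam y ≠ ⊥} := fun n =>
    Nat.rec ⟨x, hx⟩ (fun k yk =>
      ⟨(Classical.choose (step k yk.1 yk.2)).2, (Classical.choose_spec (step k yk.1 yk.2)).2.1⟩) n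
  set xs : ℕ → X := fun n => (σ n).1 with hxs
  set js : ℕ → J := fun n => (Classical.choose (step n (xs n) (σ n).2)).1 with hjs
  have horb : ∀ n, φ (js n) (xs (n+1)) = xs n := fun n =>
    (Classical.choose_spec (step n (xs n) (σ n).2)).1
  have hineq0 : ∀ n, lam (xs n) ≤ ((q (js n) (xs (n+1)) : ℝ) : EReal) + lam (xs (n+1))
      + ((δ/2^(n+1) : ℝ) : EReal) := fun n =>
    (Classical.choose_spec (step n (xs n) (σ n).2)).2.2
  -- real-valued sequence
  have hsreal : ∀ n, lam (xs n) = (((lam (xs n)).toReal : ℝ) : EReal) := fun n =>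
    (EReal.coe_toReal (lam_ne_top (xs n)) ((σ n).2)).symm
  set s : ℕ → ℝ := fun n => (lam (xs n)).toReal with hsdef
  set Q : ℕ → ℝ := fun n => q (js n) (xs (n+1)) with hQdef
  have hQS : ∀ n, s n ≤ Q n + s (n+1) + δ/2^(n+1) := by
    intro n
    have h := hineq0 n
    rw [hsreal n, hsreal (n+1)] at h
    rw [← EReal.coe_add, ← EReal.coe_add, EReal.coe_le_coe_iff] at h
    exact h
  have hQ0 : ∀ n, Q n ≤ 0 := fun n => hq0 _ _
  have hs0 : ∀ n, s n ≤ 0 := by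
    intro n
    have := lam_le0 (xs n)
    rw [hsreal n] at this
    exact_mod_cast this
  set c : ℕ → ℝ := fun k => ∑ i ∈ Finset.range k, δ/2^(i+1) with hcdef
  have hcsucc : ∀ k, c (k+1) = c k + δ/2^(k+1) := fun k => Finset.sum_range_succ _ k
  have hc0 : ∀ k, 0 ≤ c k := fun k =>
    Finset.sum_nonneg fun i _ => by positivity
  have hcle : ∀ k, c k ≤ δ := by
    intro k
    have h1 : c k = (∑ i ∈ Finset.range k, (1/2:ℝ)^i) * (δ/2) := by
      rw [Finset.sum_mul]
      refine Finset.sum_congr rfl fun i _ => ?_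
      rw [one_div, inv_pow, pow_succ]
      field_simp
    rw [h1]
    have h2 := sum_geometric_two_le k
    nlinarith
  set u : ℕ → ℝ := fun k => s k + c k with hudef
  have humono : Monotone u := by
    refine monotone_nat_of_le_succ fun k => ?_
    have h1 := hQS k
    have h2 := hQ0 k
    have h3 := hcsucc k
    show s k + c k ≤ s (k+1) + c (k+1)
    rw [h3]; linarith
  have hub : ∀ k, u k ≤ δ := fun k => by
    have := hs0 k; have := hcle k; show s k + c k ≤ δ; linarith
  have hbdd : BddAbove (Set.range u) := ⟨δ, by rintro _ ⟨k, rfl⟩; exact hub k⟩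
  set Lu : ℝ := ⨆ k, u k with hLu
  have hule : ∀ k, u k ≤ Lu := fun k => le_ciSup hbdd k
  have hnear : ∀ η : ℝ, 0 < η → ∃ N, ∀ k ≥ N, Lu - η < u k := by
    intro η hη
    obtain ⟨N, hN⟩ := exists_lt_of_lt_ciSup (show Lu - η < Lu by linarith [hule 0]; )
    · exact ⟨N, fun k hk => lt_of_lt_of_le hN (humono hk)⟩
  have hsum_ge : ∀ k m : ℕ, u k - u (k+m) ≤ ∑ i ∈ Finset.range m, Q (k+i) := by
    intro k m
    induction m with
    | zero => simp
    | succ m ih =>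
        rw [Finset.sum_range_succ]
        have h1 := hQS (k+m)
        have h2 := hcsucc (k+m)
        have h3 : u (k+m) ≤ Q (k+m) + u (k+m+1) := by
          show s (k+m) + c (k+m) ≤ Q (k+m) + (s (k+m+1) + c (k+m+1))
          rw [h2]; linarith
        have e : k+(m+1) = k+m+1 := by ring
        rw [e]
        linarith
  have hBw : ∀ k m : ℕ, birkSum φ q 0 (bwdWord js k m) (xs (k+m))
      = ∑ i ∈ Finset.range m, Q (k+i) := fun k m => bwdWord_birk φ q js xs horb k m
  have hWw : ∀ k m : ℕ, wordComp φ (bwdWord js k m) (xs (k+m)) = xs k :=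
    fun k m => bwdWord_comp φ js xs horb k m
  obtain ⟨z, -, ψ, hψ, hz⟩ := isCompact_univ.tendsto_subseq (fun n => Set.mem_univ (xs n))
  set K : ℝ := max C 0 / (1 - γ) with hKdef
  have h1γ : (0:ℝ) < 1 - γ := by linarith
  have hK0 : 0 ≤ K := div_nonneg (le_max_right _ _) h1γ.le
  -- z is in the Aubry set
  have hzaubry : manePot φ q 0 z z = 0 := by
    refine aubry_of hγ0 hγ1 hc hqLip hq0 ?_
    intro δ' hδ' ε hε
    obtain ⟨N₁, hN₁⟩ := hnear δ' hδ'
    obtain ⟨N₂, hN₂⟩ := Metric.tendsto_atTop.mp hz ε hε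
    set M := max N₁ N₂ with hM
    set k := ψ M with hk
    set l := ψ (M+1) with hl
    have hkl : k < l := hψ (by omega)
    have hkN₁ : N₁ ≤ k := le_trans (le_trans (le_max_left _ _) (hψ.le_apply (x := M))) le_rfl
    refine ⟨bwdWord js k (l-k), xs l, bwdWord_ne_nil (by omega), ?_, ?_, ?_⟩
    · exact hN₂ (M+1) (by omega)
    · have e : k + (l - k) = l := by omega
      have := hWw k (l-k)
      rw [e] at this
      rw [this]
      exact hN₂ M (le_max_right _ _)
    · have e : k + (l - k) = l := by omega
      have hBkl := hBw k (l-k)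
      rw [e] at hBkl
      rw [hBkl]
      have h4 := hsum_ge k (l-k)
      rw [e] at h4
      have h5 := hN₁ k hkN₁
      have h6 := hule l
      linarith
  -- lower bound for the potential from x to z
  have hclaim2 : ((s 0 - Lu : ℝ) : EReal) ≤ manePot φ q 0 x z := by
    apply le_manePot
    intro δ' hδ' ε hε
    have hεK : (0:ℝ) < min ε (δ'/(K+1)) := lt_min hε (by positivity)
    obtain ⟨N₃, hN₃⟩ := Metric.tendsto_atTop.mp hz _ hεK
    set M := max N₃ 1 with hM
    set l := ψ M with hl
    have hl1 : 1 ≤ l := le_trans (le_trans (le_max_right _ _) (hψ.le_apply (x := M))) le_rfl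
    have hdl : dist (xs l) z < min ε (δ'/(K+1)) := hN₃ M (le_max_left _ _)
    have hW0 : wordComp φ (bwdWord js 0 l) (xs l) = x := by
      have := hWw 0 l
      rw [Nat.zero_add] at this
      exact this
    have hB0 : birkSum φ q 0 (bwdWord js 0 l) (xs l) = ∑ i ∈ Finset.range l, Q i := by
      have := hBw 0 l
      rw [Nat.zero_add] at this
      rw [this]
      exact Finset.sum_congr rfl fun i _ => by rw [Nat.zero_add]
    have hu0 : u 0 = s 0 := by
      show s 0 + c 0 = s 0
      have : c 0 = 0 := rfl
      rw [this, add_zero]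
    refine ⟨bwdWord js 0 l, bwdWord_ne_nil (by omega), ?_, ?_⟩
    · rw [← hW0]
      refine lt_of_le_of_lt (dist_wordComp_le' hγ0 hγ1 hc _ _ _) ?_
      exact lt_of_lt_of_le hdl (min_le_left _ _)
    · have hlip := birkSum_lip' hγ0 hγ1 hc hqLip (bwdWord js 0 l) z (xs l)
      rw [← hKdef] at hlip
      have habs := (abs_le.mp hlip).1
      have hsum := hsum_ge 0 l
      rw [Nat.zero_add] at hsum
      have hsum' : u 0 - u l ≤ ∑ i ∈ Finset.range l, Q i := by
        refine le_trans hsum (le_of_eq ?_)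
        exact Finset.sum_congr rfl fun i _ => by rw [Nat.zero_add]
      have hKd : K * dist z (xs l) ≤ δ' := by
        have h7 : dist z (xs l) ≤ δ'/(K+1) := by
          rw [dist_comm]; exact le_trans hdl.le (min_le_right _ _)
        have h8 : K * dist z (xs l) ≤ K * (δ'/(K+1)) := mul_le_mul_of_nonneg_left h7 hK0
        have hK1 : K + 1 ≠ 0 := by positivity
        have h9 : K * (δ'/(K+1)) = (K/(K+1)) * δ' := by
          field_simp
        have h10 : K/(K+1) ≤ 1 := (div_le_one (by linarith)).mpr (by linarith)
        nlinarith
      have h11 := hule l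
      rw [hB0] at habs
      linarith
  -- lower bound for lam z
  have hclaim3 : ((Lu - δ : ℝ) : EReal) ≤ lam z := by
    by_contra hlt
    push_neg at hlt
    obtain ⟨cc, hlamc, hccrm⟩ : ∃ cc : ℝ, lam z < (cc : EReal) ∧ cc < Lu - δ := by
      rcases EReal_bot_or_real (lam_ne_top z) with hzb | ⟨t, hzb⟩
      · exact ⟨Lu - δ - 1, by rw [hzb]; exact EReal.bot_lt_coe _, by linarith⟩
      · have ht : t < Lu - δ := by rw [hzb] at hlt; exact_mod_cast hlt
        exact ⟨(t + (Lu - δ))/2, by rw [hzb]; exact_mod_cast (by linarith : t < (t+(Lu-δ))/2),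
          by linarith⟩
    have hev := husc z (cc : EReal) hlamc
    rw [Metric.eventually_nhds_iff] at hev
    obtain ⟨ε', hε', hball⟩ := hev
    obtain ⟨N₄, hN₄⟩ := hnear (Lu - δ - cc) (by linarith)
    obtain ⟨N₅, hN₅⟩ := Metric.tendsto_atTop.mp hz ε' hε'
    set M := max N₄ N₅ with hM
    set k := ψ M with hk
    have hkN₄ : N₄ ≤ k := le_trans (le_max_left _ _) (hψ.le_apply (x := M))
    have hku : Lu - (Lu - δ - cc) < u k := hN₄ k hkN₄
    have hsk : cc < s k := by
      have := hcle k
      have : u k = s k + c k := rfl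
      have h12 := hcle k
      show cc < s k
      have h13 : u k ≤ s k + δ := by rw [this]; linarith
      linarith
    have hlam_big : (cc : EReal) < lam (xs k) := by
      rw [hsreal k]
      exact_mod_cast hsk
    have hlam_small : lam (xs k) < (cc : EReal) := by
      refine hball ?_
      exact hN₅ M (le_max_right _ _)
    exact absurd hlam_small (not_lt_of_gt hlam_big)
  -- conclusion
  refine ⟨z, hzaubry, ?_⟩
  have hx0 : lam x = ((s 0 : ℝ) : EReal) := hsreal 0
  rw [hx0]
  have heq : ((s 0 : ℝ) : EReal)
      = ((s 0 - Lu : ℝ) : EReal) + ((Lu - δ : ℝ) : EReal) + ((δ : ℝ) : EReal) := by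
    rw [← EReal.coe_add, ← EReal.coe_add]
    norm_num
  rw [heq]
  exact add_le_add (add_le_add hclaim2 hclaim3) le_rfl

end step2sec

section master
variable {J X : Type*} [MetricSpace J] [MetricSpace X] [CompactSpace J] [CompactSpace X]
  [Nonempty J] [Nonempty X]
  {γ : ℝ} (hγ0 : 0 < γ) (hγ1 : γ < 1)
  {φ : J → X → X}
  (hc : ∀ j₁ j₂ : J, ∀ x₁ x₂ : X,
      dist (φ j₁ x₁) (φ j₂ x₂) ≤ γ * (dist j₁ j₂ + dist x₁ x₂))
  {q : J → X → ℝ} {C : ℝ}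
  (hqLip : ∀ j : J, ∀ x₁ x₂ : X, |q j x₁ - q j x₂| ≤ C * dist x₁ x₂)
  (hqnorm : ∀ x : X, (⨆ j : J, q j x) = 0)
  (hqcont : Continuous fun p : J × X => q p.1 p.2)
  (hirr : ∀ x ∈ aubry φ q 0, ∀ y ∈ aubry φ q 0, manePot φ q 0 x y = 0)

include hγ0 hγ1 hc hqLip hqnorm hqcont hirr

theorem master {lam : X → EReal}
    (husc : UpperSemicontinuous lam) (hsup : (⨆ x : X, lam x) = 0)
    (hinv : ∀ x : X, (⨆ (p : J × X) (_ : φ p.1 p.2 = x),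
        ((q p.1 p.2 : ℝ) : EReal) + lam p.2) = lam x)
    {z' : X} (hz' : z' ∈ aubry φ q 0) (x : X) : lam x = manePot φ q 0 x z' := by
  have hq0 : ∀ (j : J) (x : X), q j x ≤ 0 := q_nonpos hqnorm hqcont
  -- lam vanishes on the Aubry set
  have haubry0 : ∀ w ∈ aubry φ q 0, lam w = 0 := by
    intro w hw
    refine le_antisymm (by rw [← hsup]; exact le_iSup lam w) ?_
    have hzn : ∀ n : ℕ, ((-(2/((n:ℝ)+1)) : ℝ) : EReal) ≤ lam w := by
      intro n
      have hpos : (0:ℝ) < 1/((n:ℝ)+1) := by positivity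
      obtain ⟨xn, hxnlt⟩ : ∃ xn : X, ((-(1/((n:ℝ)+1)) : ℝ) : EReal) < lam xn := by
        have h0 : ((-(1/((n:ℝ)+1)) : ℝ) : EReal) < (0 : EReal) := by
          rw [show (0 : EReal) = ((0:ℝ) : EReal) from rfl]
          exact_mod_cast (by linarith : -(1/((n:ℝ)+1)) < 0)
        rw [← hsup, lt_iSup_iff] at h0
        exact h0
      have hxnne : lam xn ≠ ⊥ := fun h => by
        rw [h] at hxnlt; exact absurd hxnlt (not_lt_bot)
      obtain ⟨z, hzaub, hle⟩ := step2 hγ0 hγ1 hc hqLip hq0 husc hsup hinv xn hxnne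
        (1/((n:ℝ)+1)) hpos
      have hzaub' : z ∈ aubry φ q 0 := hzaub
      have h2 : lam xn ≤ lam z + ((1/((n:ℝ)+1) : ℝ) : EReal) := by
        refine le_trans hle ?_
        have h3 : manePot φ q 0 xn z + lam z ≤ 0 + lam z :=
          add_le_add (manePot_nonpos hq0 xn z) le_rfl
        calc manePot φ q 0 xn z + lam z + ((1/((n:ℝ)+1) : ℝ) : EReal)
            ≤ 0 + lam z + ((1/((n:ℝ)+1) : ℝ) : EReal) := add_le_add h3 le_rfl
          _ = lam z + ((1/((n:ℝ)+1) : ℝ) : EReal) := by rw [zero_add]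
      have hzne : lam z ≠ ⊥ := by
        intro hb
        rw [hb, EReal.bot_add] at h2
        rw [le_bot_iff] at h2
        exact hxnne h2
      have hzle2 : lam z ≤ 0 := by rw [← hsup]; exact le_iSup lam z
      have hzlt : lam z ≠ ⊤ := ne_top_of_le_ne_top (by simp) hzle2
      rcases EReal_bot_or_real hzlt with hb | ⟨t, ht⟩
      · exact absurd hb hzne
      have htn : -(2/((n:ℝ)+1)) ≤ t := by
        rw [ht, ← EReal.coe_add] at h2
        have h4 : (-(1/((n:ℝ)+1)) : ℝ) < t + 1/((n:ℝ)+1) := by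
          have := lt_of_lt_of_le hxnlt h2
          exact_mod_cast this
        have h4' : 2/((n:ℝ)+1) = 1/((n:ℝ)+1) + 1/((n:ℝ)+1) := by ring
        linarith
      have h5 := lam_ge_manePot hinv hq0 husc hsup w z
      rw [hirr w hw z hzaub'] at h5
      rw [zero_add] at h5
      calc ((-(2/((n:ℝ)+1)) : ℝ) : EReal) ≤ ((t : ℝ) : EReal) := by exact_mod_cast htn
        _ = lam z := ht.symm
        _ ≤ lam w := h5
    rw [show (0 : EReal) = ((0:ℝ) : EReal) from rfl]
    refine ereal_le_of_forall_sub fun δ hδ => ?_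
    obtain ⟨n, hn⟩ := exists_nat_gt (2/δ)
    have h6 : 2/((n:ℝ)+1) ≤ δ := by
      have h7 : (0:ℝ) < (n:ℝ)+1 := by positivity
      rw [div_le_iff₀ h7]
      have h8 : 2/δ < (n:ℝ)+1 := by
        refine lt_trans hn ?_; norm_num
      rw [div_lt_iff₀ hδ] at h8
      linarith
    refine le_trans ?_ (hzn n)
    exact_mod_cast (by linarith : (0:ℝ) - δ ≤ -(2/((n:ℝ)+1)))
  refine le_antisymm ?_ ?_
  · refine ereal_le_of_forall_add fun δ hδ => ?_
    rcases eq_or_ne (lam x) ⊥ with hb | hb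
    · rw [hb]; exact bot_le
    obtain ⟨z, hzaub, hle⟩ := step2 hγ0 hγ1 hc hqLip hq0 husc hsup hinv x hb δ hδ
    have hzaub' : z ∈ aubry φ q 0 := hzaub
    have htri := manePot_triangle hγ0 hγ1 hc hqLip hq0 x z z'
    rw [hirr z hzaub' z' hz', add_zero] at htri
    have hlz := haubry0 z hzaub'
    calc lam x ≤ manePot φ q 0 x z + lam z + ((δ : ℝ) : EReal) := hle
      _ = manePot φ q 0 x z + ((δ : ℝ) : EReal) := by rw [hlz, add_zero]
      _ ≤ manePot φ q 0 x z' + ((δ : ℝ) : EReal) := add_le_add htri le_rfl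
  · have h5 := lam_ge_manePot hinv hq0 husc hsup x z'
    rw [haubry0 z' hz', add_zero] at h5
    exact h5

end master

theorem stmt13 {J X : Type*} [MetricSpace J] [MetricSpace X]
    [CompactSpace J] [CompactSpace X] [Nonempty J] [Nonempty X]
    (γ : ℝ) (hγ0 : 0 < γ) (hγ1 : γ < 1)
    (φ : J → X → X)
    (hc : ∀ j₁ j₂ : J, ∀ x₁ x₂ : X,
      dist (φ j₁ x₁) (φ j₂ x₂) ≤ γ * (dist j₁ j₂ + dist x₁ x₂))
    (q : J → X → ℝ) (C : ℝ)
    (hqLip : ∀ j : J, ∀ x₁ x₂ : X, |q j x₁ - q j x₂| ≤ C * dist x₁ x₂)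
    (hqnorm : ∀ x : X, (⨆ j : J, q j x) = 0)
    (hqcont : Continuous fun p : J × X => q p.1 p.2)
    (hirr : ∀ x ∈ aubry φ q 0, ∀ y ∈ aubry φ q 0, manePot φ q 0 x y = 0) :
    (∃! lam : X → EReal, UpperSemicontinuous lam ∧ (⨆ x : X, lam x) = 0 ∧
      ∀ x : X, (⨆ (p : J × X) (_ : φ p.1 p.2 = x),
        ((q p.1 p.2 : ℝ) : EReal) + lam p.2) = lam x) ∧
    (∀ lam : X → EReal,
      UpperSemicontinuous lam → (⨆ x : X, lam x) = 0 →
      (∀ x : X, (⨆ (p : J × X) (_ : φ p.1 p.2 = x),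
        ((q p.1 p.2 : ℝ) : EReal) + lam p.2) = lam x) →
      ∀ z ∈ aubry φ q 0, ∀ x : X, lam x = manePot φ q 0 x z) := by
  have hq0 : ∀ (j : J) (x : X), q j x ≤ 0 := q_nonpos hqnorm hqcont
  obtain ⟨z₀, hz₀⟩ := aubry_nonempty hγ0 hγ1 hc hqLip hq0 hqnorm hqcont
  have hz₀' : z₀ ∈ aubry φ q 0 := hz₀
  set lam₀ : X → EReal := fun x => manePot φ q 0 x z₀ with hlam₀
  have husc₀ : UpperSemicontinuous lam₀ := manePot_usc z₀
  have hsup₀ : (⨆ x : X, lam₀ x) = 0 := by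
    refine le_antisymm (iSup_le fun x => manePot_nonpos hq0 x z₀) ?_
    have h1 : lam₀ z₀ = 0 := hz₀
    rw [← h1]
    exact le_iSup lam₀ z₀
  have hinv₀ : ∀ x : X, (⨆ (p : J × X) (_ : φ p.1 p.2 = x),
      ((q p.1 p.2 : ℝ) : EReal) + lam₀ p.2) = lam₀ x := by
    intro x
    refine le_antisymm (iSup₂_le fun p hp => ?_)
      (manePot_inv_ge hγ0 hγ1 hc hqLip hq0 hqcont hz₀ x)
    have := manePot_step hγ0 hγ1 hc hqLip hq0 p.1 p.2 z₀
    rw [hp] at this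
    exact this
  refine ⟨⟨lam₀, ⟨husc₀, hsup₀, hinv₀⟩, ?_⟩, ?_⟩
  · rintro lam' ⟨husc', hsup', hinv'⟩
    funext x
    exact master hγ0 hγ1 hc hqLip hqnorm hqcont hirr husc' hsup' hinv' hz₀' x
  · intro lam husc hsup hinv z hz x
    exact master hγ0 hγ1 hc hqLip hqnorm hqcont hirr husc hsup hinv hz x
end

section
/- Suppose for every f ∈ C(X,ℝ) the limit Γ(f) := lim_{β→∞} (1/β)·log ∫_X e^{βf} dρ_β exists, where ρ_β are Borel probabilities on a compact metric space X. Then Γ is an idempotent probability: Γ(0)=0, Γ(a+f)=a+Γ(f) for all a∈ℝ, and Γ(max(f,g)) = max(Γ(f),Γ(g)) for all f,g ∈ C(X,ℝ). -/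
open MeasureTheory Filter Topology

private lemma integ {X : Type*} [MetricSpace X] [CompactSpace X]
    [MeasurableSpace X] [BorelSpace X] (μ : Measure X) [IsProbabilityMeasure μ]
    (f : C(X, ℝ)) (β : ℝ) : Integrable (fun x => Real.exp (β * f x)) μ := by
  have hc : Continuous (fun x => Real.exp (β * f x)) := by continuity
  exact hc.integrable_of_hasCompactSupport
    (isCompact_univ.of_isClosed_subset isClosed_closure (Set.subset_univ _))

private lemma integ_pos {X : Type*} [MetricSpace X] [CompactSpace X]
    [MeasurableSpace X] [BorelSpace X] (μ : Measure X) [IsProbabilityMeasure μ]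
    (f : C(X, ℝ)) (β : ℝ) : 0 < ∫ x, Real.exp (β * f x) ∂μ := by
  have h1 : ∫ _x, Real.exp (-(|β| * ‖f‖)) ∂μ ≤ ∫ x, Real.exp (β * f x) ∂μ := by
    apply integral_mono (integrable_const _) (integ μ f β)
    intro x
    apply Real.exp_le_exp.2
    have : |β * f x| ≤ |β| * ‖f‖ := by
      rw [abs_mul]
      exact mul_le_mul_of_nonneg_left (f.norm_coe_le_norm x) (abs_nonneg β)
    linarith [neg_abs_le (β * f x)]
  have h2 : ∫ _x, Real.exp (-(|β| * ‖f‖)) ∂μ = Real.exp (-(|β| * ‖f‖)) := by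
    simp [measure_univ]
  calc (0:ℝ) < Real.exp (-(|β| * ‖f‖)) := Real.exp_pos _
    _ ≤ _ := h2 ▸ h1

theorem stmt16 {X : Type*} [MetricSpace X] [CompactSpace X]
    [MeasurableSpace X] [BorelSpace X]
    (ρ : ℝ → Measure X) (hρ : ∀ β : ℝ, IsProbabilityMeasure (ρ β))
    (Γ : C(X, ℝ) → ℝ)
    (hΓ : ∀ f : C(X, ℝ),
      Tendsto (fun β : ℝ => (1 / β) * Real.log (∫ x, Real.exp (β * f x) ∂ρ β))
        atTop (𝓝 (Γ f))) :
    Γ 0 = 0 ∧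
    (∀ (a : ℝ) (f : C(X, ℝ)), Γ (ContinuousMap.const X a + f) = a + Γ f) ∧
    (∀ f g : C(X, ℝ), Γ (f ⊔ g) = max (Γ f) (Γ g)) := by
  haveI := hρ
  refine ⟨?_, ?_, ?_⟩
  · have h0 : Tendsto (fun β : ℝ => (1 / β) *
        Real.log (∫ x, Real.exp (β * (0 : C(X,ℝ)) x) ∂ρ β)) atTop (𝓝 0) := by
      have : ∀ β : ℝ, (1 / β) * Real.log (∫ x, Real.exp (β * (0 : C(X,ℝ)) x) ∂ρ β) = 0 := by
        intro β; simp [measure_univ]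
      simp only [this]
      exact tendsto_const_nhds
    exact tendsto_nhds_unique (hΓ 0) h0
  · intro a f
    have heq : ∀ᶠ β : ℝ in atTop,
        (1 / β) * Real.log (∫ x, Real.exp (β * (ContinuousMap.const X a + f) x) ∂ρ β)
        = a + (1 / β) * Real.log (∫ x, Real.exp (β * f x) ∂ρ β) := by
      filter_upwards [eventually_gt_atTop (0:ℝ)] with β hβ
      have : (fun x => Real.exp (β * (ContinuousMap.const X a + f) x))
          = fun x => Real.exp (β * a) * Real.exp (β * f x) := by
        funext x
        simp [ContinuousMap.add_apply, mul_add, Real.exp_add]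
      rw [this, integral_const_mul, Real.log_mul (Real.exp_ne_zero _)
        (ne_of_gt (integ_pos (ρ β) f β)), Real.log_exp]
      field_simp
    have := (hΓ f).const_add a
    exact tendsto_nhds_unique (hΓ (ContinuousMap.const X a + f)) (Tendsto.congr' (heq.mono fun _ h => h.symm) this)
  · intro f g
    set F : C(X,ℝ) → ℝ → ℝ := fun h β => (1 / β) * Real.log (∫ x, Real.exp (β * h x) ∂ρ β)
    have hlow : ∀ᶠ β : ℝ in atTop, max (F f β) (F g β) ≤ F (f ⊔ g) β := by
      filter_upwards [eventually_gt_atTop (0:ℝ)] with β hβ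
      have key : ∀ h : C(X,ℝ), (∀ x, h x ≤ (f ⊔ g) x) → F h β ≤ F (f ⊔ g) β := by
        intro h hle
        apply mul_le_mul_of_nonneg_left _ (by positivity)
        apply Real.log_le_log (integ_pos (ρ β) h β)
        apply integral_mono (integ _ _ _) (integ _ _ _)
        intro x
        exact Real.exp_le_exp.2 (mul_le_mul_of_nonneg_left (hle x) hβ.le)
      exact max_le (key f (fun x => by simp)) (key g (fun x => by simp))
    have hup : ∀ᶠ β : ℝ in atTop,
        F (f ⊔ g) β ≤ max (F f β) (F g β) + Real.log 2 / β := by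
      filter_upwards [eventually_gt_atTop (0:ℝ)] with β hβ
      have hsum : ∫ x, Real.exp (β * (f ⊔ g) x) ∂ρ β
          ≤ (∫ x, Real.exp (β * f x) ∂ρ β) + ∫ x, Real.exp (β * g x) ∂ρ β := by
        rw [← integral_add (integ _ _ _) (integ _ _ _)]
        apply integral_mono (integ _ _ _) ((integ _ f _).add (integ _ g _))
        intro x
        simp only [ContinuousMap.sup_apply, Pi.add_apply]
        rcases le_total (f x) (g x) with h | h
        · rw [max_eq_right h]
          linarith [Real.exp_pos (β * f x)]
        · rw [max_eq_left h]
          linarith [Real.exp_pos (β * g x)]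
      have h2max : (∫ x, Real.exp (β * f x) ∂ρ β) + ∫ x, Real.exp (β * g x) ∂ρ β
          ≤ 2 * max (∫ x, Real.exp (β * f x) ∂ρ β) (∫ x, Real.exp (β * g x) ∂ρ β) := by
        have := le_max_left (∫ x, Real.exp (β * f x) ∂ρ β) (∫ x, Real.exp (β * g x) ∂ρ β)
        have := le_max_right (∫ x, Real.exp (β * f x) ∂ρ β) (∫ x, Real.exp (β * g x) ∂ρ β)
        linarith
      have hmaxpos : 0 < max (∫ x, Real.exp (β * f x) ∂ρ β) (∫ x, Real.exp (β * g x) ∂ρ β) :=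
        lt_of_lt_of_le (integ_pos (ρ β) f β) (le_max_left _ _)
      have hlog : Real.log (∫ x, Real.exp (β * (f ⊔ g) x) ∂ρ β)
          ≤ Real.log 2 + max (Real.log (∫ x, Real.exp (β * f x) ∂ρ β))
              (Real.log (∫ x, Real.exp (β * g x) ∂ρ β)) := by
        calc Real.log (∫ x, Real.exp (β * (f ⊔ g) x) ∂ρ β)
            ≤ Real.log (2 * max (∫ x, Real.exp (β * f x) ∂ρ β)
                (∫ x, Real.exp (β * g x) ∂ρ β)) :=
              Real.log_le_log (integ_pos (ρ β) (f ⊔ g) β) (hsum.trans h2max)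
          _ = Real.log 2 + Real.log (max _ _) := Real.log_mul two_ne_zero hmaxpos.ne'
          _ = _ := by
              rcases le_total (∫ x, Real.exp (β * f x) ∂ρ β) (∫ x, Real.exp (β * g x) ∂ρ β)
                with h | h
              · rw [max_eq_right h, max_eq_right (Real.log_le_log (integ_pos (ρ β) f β) h)]
              · rw [max_eq_left h, max_eq_left (Real.log_le_log (integ_pos (ρ β) g β) h)]
      have : F (f ⊔ g) β ≤ (1/β) * (Real.log 2 + max (Real.log (∫ x, Real.exp (β * f x) ∂ρ β))
          (Real.log (∫ x, Real.exp (β * g x) ∂ρ β))) :=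
        mul_le_mul_of_nonneg_left hlog (by positivity)
      calc F (f ⊔ g) β ≤ _ := this
        _ = max (F f β) (F g β) + Real.log 2 / β := by
            rw [mul_add, mul_max_of_nonneg _ _ (by positivity : (0:ℝ) ≤ 1/β)]
            ring_nf
            simp only [F, one_div]
    have hmaxtend : Tendsto (fun β => max (F f β) (F g β)) atTop (𝓝 (max (Γ f) (Γ g))) :=
      (hΓ f).max (hΓ g)
    have huptend : Tendsto (fun β => max (F f β) (F g β) + Real.log 2 / β) atTop
        (𝓝 (max (Γ f) (Γ g))) := by
      have : Tendsto (fun β : ℝ => Real.log 2 / β) atTop (𝓝 0) :=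
        tendsto_const_nhds.div_atTop tendsto_id
      simpa using hmaxtend.add this
    have : Tendsto (F (f ⊔ g)) atTop (𝓝 (max (Γ f) (Γ g))) :=
      tendsto_of_tendsto_of_tendsto_of_le_of_le' hmaxtend huptend hlow hup
    exact tendsto_nhds_unique (hΓ (f ⊔ g)) this
end
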